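/- arXiv:1705.03263 — 3 statements merged into one kernel-verified Lean document; each statement's English description precedes it below -/
import Mathlib

section
/- Let n ≥ 1 and let C : (Fin n → Bool) → (Fin m → Bool) → Bool satisfy C (fun i => ! x i) (fun j => ! y j) = ! (C x y) for all x, y, and assume that for every x, (∃ y, C x y = true) ↔ ¬ (∃ y, C (fun i => ! x i) y = true). Then for every x : Fin n → Bool, (∃ y, C x y = true) ↔ C x (fun _ => x 0) = true; that is, replacing every non-deterministic input by the ordinary input x₀ yields a deterministic circuit computing the same function. -/
theorem eq_true_of_selfDual_of_not_exists_compl {ι κ : Type*}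
    {C : (ι → Bool) → (κ → Bool) → Bool}
    (hsd : ∀ (x : ι → Bool) (y : κ → Bool), C (fun i => !x i) (fun j => !y j) = !(C x y))
    {x : ι → Bool} (hrej : ¬ ∃ y, C (fun i => !x i) y = true) (y : κ → Bool) :
    C x y = true := by
  by_contra hy
  exact hrej ⟨fun j => !y j, by simpa [hsd] using hy⟩

/-- For a self-dual non-deterministic circuit computing a self-dual function, replacing all
non-deterministic inputs by the ordinary input x₀ yields a deterministic circuit computing
the same function. -/
theorem selfDual_nondet_to_det {n m : ℕ} (hn : 1 ≤ n)
    (C : (Fin n → Bool) → (Fin m → Bool) → Bool)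
    (hsd : ∀ (x : Fin n → Bool) (y : Fin m → Bool),
      C (fun i => !x i) (fun j => !y j) = !(C x y))
    (hf : ∀ x : Fin n → Bool,
      (∃ y, C x y = true) ↔ ¬ (∃ y, C (fun i => !x i) y = true)) :
    ∀ x : Fin n → Bool, (∃ y, C x y = true) ↔ C x (fun _ => x ⟨0, hn⟩) = true := by
  intro x
  refine ⟨fun hacc => ?_, fun h => ⟨_, h⟩⟩
  exact eq_true_of_selfDual_of_not_exists_compl hsd ((hf x).mp hacc) _
end

section
/- Every self-dual Boolean function f : (Fin n → Bool) → Bool with n ≥ 1 belongs to the clone generated by {d}, where d(x₁,x₂,x₃) = (x₁ ∧ ¬x₂) ∨ (¬x₂ ∧ ¬x₃) ∨ (¬x₃ ∧ x₁); that is, d generates the clone of all self-dual Boolean functions. -/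
/-- The clone generated by a set `B` of Boolean functions: the smallest family containing all
projections and `B`, and closed under composition. -/
inductive InClone (B : (k : ℕ) → ((Fin k → Bool) → Bool) → Prop) :
    (n : ℕ) → ((Fin n → Bool) → Bool) → Prop
  | proj {n : ℕ} (i : Fin n) : InClone B n (fun x => x i)
  | base {k : ℕ} {g : (Fin k → Bool) → Bool} (hg : B k g) : InClone B k g
  | comp {k n : ℕ} {g : (Fin k → Bool) → Bool} {h : Fin k → ((Fin n → Bool) → Bool)}
      (hg : InClone B k g) (hh : ∀ i, InClone B n (h i)) :
      InClone B n (fun x => g (fun i => h i x))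

/-- d(x₁,x₂,x₃) = (x₁ ∧ ¬x₂) ∨ (¬x₂ ∧ ¬x₃) ∨ (¬x₃ ∧ x₁). -/
def d : (Fin 3 → Bool) → Bool :=
  fun x => (x 0 && !x 1) || (!x 1 && !x 2) || (!x 2 && x 0)

/-- The generating set {d}. -/
inductive DBase : (k : ℕ) → ((Fin k → Bool) → Bool) → Prop
  | d : DBase 3 d

/-!
Since `d x x x = !x` and `d x (!y) (!z) = maj x y z`, it suffices to show that negation and
majority generate every self-dual function. There is no self-dual function of arity `0`, and the
unary ones are the identity and negation. For arity `m + 2`, substituting `x₀ := x₁` resp.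
`x₀ := !x₁` in `f` gives self-dual functions `p`, `q` of the last `m + 1` variables, and
`f x = maj p (maj q x₀ x₁) (maj q (!x₀) (!x₁))`: if `x₀ = x₁` the inner majorities are `x₀` and
`!x₀`, which leaves `p`; otherwise both are `q`.
-/

def IsSelfDual {n : ℕ} (f : (Fin n → Bool) → Bool) : Prop :=
  ∀ x : Fin n → Bool, f (fun i => !x i) = !f x

def maj (a b c : Bool) : Bool := a && b || b && c || c && a

theorem ite_eq_maj (a b u v : Bool) :
    (if a = b then u else v) = maj u (maj v a b) (maj v (!a) (!b)) := by
  cases a <;> cases b <;> cases u <;> cases v <;> rfl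

theorem apply_eq_ite_tail {m : ℕ} (f : (Fin (m + 2) → Bool) → Bool) (x : Fin (m + 2) → Bool) :
    f x = if x 0 = x 1 then f (Fin.cons (x 1) (Fin.tail x))
      else f (Fin.cons (!x 1) (Fin.tail x)) := by
  split_ifs with h
  · rw [← h, Fin.cons_self_tail]
  · rw [← Bool.eq_not.mpr h, Fin.cons_self_tail]

namespace IsSelfDual

theorem arity_pos {n : ℕ} {f : (Fin n → Bool) → Bool} (hf : IsSelfDual f) : 0 < n := by
  rcases n with _ | n
  · have h := hf Fin.elim0
    rw [Subsingleton.elim (fun i => !Fin.elim0 i) Fin.elim0] at h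
    exact ((Bool.eq_not_self _).mp h).elim
  · exact n.succ_pos

theorem eq_id_or_not_of_arity_one {f : (Fin 1 → Bool) → Bool} (hf : IsSelfDual f) :
    f = (fun x => x 0) ∨ f = (fun x => !x 0) := by
  have hconst (x : Fin 1 → Bool) : f x = f fun _ => x 0 :=
    congrArg f (funext fun i => by rw [Fin.fin_one_eq_zero i])
  have hfalse : f (fun _ => false) = !f (fun _ => true) := hf fun _ => true
  cases htrue : f (fun _ => true) <;> [right; left] <;> funext x <;> rw [hconst] <;>
    cases x 0 <;> simp [hfalse, htrue]

theorem comp_cons {m : ℕ} {f : (Fin (m + 2) → Bool) → Bool} {g : (Fin (m + 1) → Bool) → Bool}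
    (hf : IsSelfDual f) (hg : IsSelfDual g) :
    IsSelfDual fun y => f (Fin.cons (g y) y) := by
  intro y
  show f (Fin.cons (g fun i => !y i) fun i => !y i) = !f (Fin.cons (g y) y)
  rw [hg, ← hf]
  exact congrArg f (Fin.comp_cons (!·) _ y).symm

end IsSelfDual

namespace InClone

variable {B : (k : ℕ) → ((Fin k → Bool) → Bool) → Prop}

theorem of_eq {n : ℕ} {f g : (Fin n → Bool) → Bool} (hf : InClone B n f) (h : ∀ x, f x = g x) :
    InClone B n g :=
  funext h ▸ hf

theorem comp_tail {n : ℕ} {f : (Fin n → Bool) → Bool} (hf : InClone B n f) :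
    InClone B (n + 1) fun x => f (Fin.tail x) :=
  comp hf fun i => proj i.succ

theorem comp₁ {n : ℕ} {g : Bool → Bool} {h : (Fin n → Bool) → Bool}
    (hg : InClone B 1 fun x => g (x 0)) (hh : InClone B n h) :
    InClone B n fun x => g (h x) :=
  comp (h := fun _ => h) hg fun _ => hh

theorem comp₃ {n : ℕ} {g : Bool → Bool → Bool → Bool} {h₁ h₂ h₃ : (Fin n → Bool) → Bool}
    (hg : InClone B 3 fun x => g (x 0) (x 1) (x 2))
    (hh₁ : InClone B n h₁) (hh₂ : InClone B n h₂) (hh₃ : InClone B n h₃) :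
    InClone B n fun x => g (h₁ x) (h₂ x) (h₃ x) :=
  comp (h := ![h₁, h₂, h₃]) hg fun i => by fin_cases i <;> assumption

theorem of_isSelfDual (hnot : InClone B 1 fun x => !x 0)
    (hmaj : InClone B 3 fun x => maj (x 0) (x 1) (x 2)) :
    ∀ {n : ℕ} {f : (Fin n → Bool) → Bool}, IsSelfDual f → InClone B n f
  | 0, _, hf => absurd hf.arity_pos (lt_irrefl 0)
  | 1, _, hf => by
    rcases hf.eq_id_or_not_of_arity_one with rfl | rfl
    exacts [proj 0, hnot]
  | m + 2, f, hf => by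
    have hp := (of_isSelfDual hnot hmaj (hf.comp_cons (g := fun y => y 0) fun _ => rfl)).comp_tail
    have hq := (of_isSelfDual hnot hmaj (hf.comp_cons (g := fun y => !y 0) fun _ => rfl)).comp_tail
    refine (comp₃ hmaj hp (comp₃ hmaj hq (proj 0) (proj 1))
      (comp₃ hmaj hq (comp₁ hnot (proj 0)) (comp₁ hnot (proj 1)))).of_eq fun x => ?_
    rw [← ite_eq_maj, apply_eq_ite_tail f x]
    rfl

end InClone

theorem inClone_dBase_not : InClone DBase 1 fun x => !x 0 :=
  (InClone.comp₃ (g := fun a b c => d ![a, b, c]) (.base .d) (.proj 0) (.proj 0)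
    (.proj 0)).of_eq fun x => by
    cases x 0 <;> rfl

theorem inClone_dBase_maj : InClone DBase 3 fun x => maj (x 0) (x 1) (x 2) :=
  (InClone.comp₃ (g := fun a b c => d ![a, b, c]) (.base .d) (.proj 0)
    (InClone.comp₁ inClone_dBase_not (.proj 1))
    (InClone.comp₁ inClone_dBase_not (.proj 2))).of_eq fun x => by
    simp [d, maj]

theorem selfDual_mem_clone_d_general {n : ℕ} (f : (Fin n → Bool) → Bool)
    (hf : ∀ x : Fin n → Bool, f (fun i => !x i) = !(f x)) :
    InClone DBase n f :=
  InClone.of_isSelfDual inClone_dBase_not inClone_dBase_maj hf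

/-- Every self-dual Boolean function (with n ≥ 1) belongs to the clone generated by {d}. -/
theorem selfDual_mem_clone_d {n : ℕ} (hn : 1 ≤ n) (f : (Fin n → Bool) → Bool)
    (hf : ∀ x : Fin n → Bool, f (fun i => !x i) = !(f x)) :
    InClone DBase n f :=
  selfDual_mem_clone_d_general f hf
end

section
/- A Boolean function f : (Fin n → Bool) → Bool (with n ≥ 1) belongs to the clone generated by binary XOR and the constant function true if and only if f is affine, i.e., there exist a finite set S ⊆ Fin n and a constant c : Bool such that for every x, f x = c XOR (the XOR over all i ∈ S of x i). -/
/-- The generating set {⊕, 1}: binary XOR and the constant function true (arity 1). -/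
inductive LinBase : (k : ℕ) → ((Fin k → Bool) → Bool) → Prop
  | xor : LinBase 2 (fun x => xor (x 0) (x 1))
  | one : LinBase 1 (fun _ => true)

instance : Std.Commutative xor := ⟨Bool.xor_comm⟩
instance : Std.Associative xor := ⟨Bool.xor_assoc⟩

/-! Affine Boolean functions are closed under XOR and under composition, so every member of the
clone is affine. Conversely `c ⊕ ⊕_{i ∈ S} xᵢ` is built from projections by repeated XOR, with
the constant `true` (and `false = true ⊕ true`) obtained by feeding any variable to the unary
generator. -/

open scoped symmDiff

theorem Finset.fold_xor_symmDiff {α : Type*} [DecidableEq α] (S T : Finset α) (g : α → Bool) :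
    (S ∆ T).fold xor false g = xor (S.fold xor false g) (T.fold xor false g) := by
  have hunion : (S ∪ T).fold xor false g =
      xor ((S ∆ T).fold xor false g) ((S ∩ T).fold xor false g) := by
    have hsplit : S ∆ T ∪ S ∩ T = S ∪ T := symmDiff_sup_inf S T
    have := Finset.fold_disjUnion (op := xor) (b₁ := false) (b₂ := false) (f := g)
      (disjoint_symmDiff_inf S T)
    rwa [Finset.disjUnion_eq_union, Finset.inf_eq_inter, hsplit] at this
  have h := Finset.fold_union_inter (op := xor) (s₁ := S) (s₂ := T) (b₁ := false) (b₂ := false)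
    (f := g)
  rw [hunion, Bool.xor_assoc, Bool.xor_self, Bool.xor_false] at h
  exact h

def IsAffine {n : ℕ} (f : (Fin n → Bool) → Bool) : Prop :=
  ∃ (S : Finset (Fin n)) (c : Bool), ∀ x : Fin n → Bool, f x = xor c (S.fold xor false x)

namespace IsAffine

variable {n : ℕ}

theorem const (c : Bool) : IsAffine (fun _ : Fin n → Bool => c) :=
  ⟨∅, c, fun _ => by simp⟩

theorem proj (i : Fin n) : IsAffine (fun x : Fin n → Bool => x i) :=
  ⟨{i}, false, fun _ => by simp⟩

theorem xor {f g : (Fin n → Bool) → Bool} (hf : IsAffine f) (hg : IsAffine g) :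
    IsAffine (fun x => Bool.xor (f x) (g x)) := by
  obtain ⟨S, c, hS⟩ := hf
  obtain ⟨T, d, hT⟩ := hg
  refine ⟨S ∆ T, Bool.xor c d, fun x => ?_⟩
  show Bool.xor (f x) (g x) = _
  rw [hS, hT, Finset.fold_xor_symmDiff]
  ac_rfl

theorem fold {k : ℕ} {h : Fin k → (Fin n → Bool) → Bool} (hh : ∀ i, IsAffine (h i))
    (T : Finset (Fin k)) : IsAffine (fun x => T.fold Bool.xor false (fun i => h i x)) := by
  induction T using Finset.induction_on with
  | empty => simpa using const false
  | insert a T ha ih => simpa only [Finset.fold_insert ha] using (hh a).xor ih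

theorem comp {k : ℕ} {g : (Fin k → Bool) → Bool} {h : Fin k → (Fin n → Bool) → Bool}
    (hg : IsAffine g) (hh : ∀ i, IsAffine (h i)) : IsAffine (fun x => g (fun i => h i x)) := by
  obtain ⟨T, c, hT⟩ := hg
  simpa only [hT] using (const c).xor (fold hh T)

end IsAffine

theorem InClone.isAffine {B : (k : ℕ) → ((Fin k → Bool) → Bool) → Prop}
    (hB : ∀ k g, B k g → IsAffine g) {n : ℕ} {f : (Fin n → Bool) → Bool} (hf : InClone B n f) :
    IsAffine f := by
  induction hf with
  | proj i => exact IsAffine.proj i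
  | base hg => exact hB _ _ hg
  | comp _ _ ihg ihh => exact ihg.comp ihh

theorem LinBase.isAffine {k : ℕ} {g : (Fin k → Bool) → Bool} (hg : LinBase k g) : IsAffine g := by
  cases hg with
  | xor => exact (IsAffine.proj 0).xor (IsAffine.proj 1)
  | one => exact IsAffine.const true

namespace InClone

variable {n : ℕ}

theorem linBase_xor {f g : (Fin n → Bool) → Bool} (hf : InClone LinBase n f)
    (hg : InClone LinBase n g) : InClone LinBase n (fun x => xor (f x) (g x)) :=
  comp (h := ![f, g]) (base LinBase.xor) (Fin.forall_fin_two.2 ⟨hf, hg⟩)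

theorem linBase_const (hn : 1 ≤ n) (c : Bool) : InClone LinBase n (fun _ => c) := by
  have htrue : InClone LinBase n (fun _ => true) :=
    comp (h := fun _ : Fin 1 => fun x => x ⟨0, hn⟩) (base LinBase.one) (fun _ => proj _)
  cases c with
  | true => exact htrue
  | false => simpa using linBase_xor htrue htrue

theorem linBase_fold (hn : 1 ≤ n) (S : Finset (Fin n)) :
    InClone LinBase n (fun x => S.fold xor false x) := by
  induction S using Finset.induction_on with
  | empty => simpa using linBase_const hn false
  | insert a S ha ih => simpa only [Finset.fold_insert ha] using linBase_xor (proj a) ih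

theorem linBase_of_isAffine (hn : 1 ≤ n) {f : (Fin n → Bool) → Bool} (hf : IsAffine f) :
    InClone LinBase n f := by
  obtain ⟨S, c, hS⟩ := hf
  rw [funext hS]
  exact linBase_xor (linBase_const hn c) (linBase_fold hn S)

end InClone

/-- A Boolean function (with n ≥ 1) is in the clone generated by {⊕, 1} iff it is affine,
i.e. of the form c ⊕ (⊕_{i ∈ S} xᵢ). -/
theorem clone_lin_iff_affine {n : ℕ} (hn : 1 ≤ n) (f : (Fin n → Bool) → Bool) :
    InClone LinBase n f ↔
      ∃ (S : Finset (Fin n)) (c : Bool),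
        ∀ x : Fin n → Bool, f x = xor c (S.fold xor false (fun i => x i)) :=
  ⟨InClone.isAffine fun _ _ => LinBase.isAffine, InClone.linBase_of_isAffine hn⟩
end
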